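/- Let V₈ = ℂ⁸ with standard basis v₁,…,v₈ and let η₆ := v₄∧v₅∧v₆ + v₁∧v₄∧v₇ + v₂∧v₅∧v₇ + v₂∧v₆∧v₈ + v₃∧v₅∧v₈ ∈ ⋀³V₈. For every (α, β) ∈ ℂ² ∖ {(0,0)}, setting U₂ := span{v₈, αv₄+βv₇} and U₅ := span{v₄, v₅, v₇, v₈, αv₂+βv₆}, one has η₆ ∈ U₂∧U₅∧V₈ + ⋀³U₅. In particular, there exist infinitely many pairs of subspaces (V₂, V₅) with dim V₂ = 2, dim V₅ = 5, V₂ ⊆ V₅ ⊆ V₈ and η₆ ∈ ⋀³V₅ + V₂∧V₅∧V₈. -/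

import Mathlib

open ExteriorAlgebra

noncomputable section

/-- `V₈ = ℂ⁸`. -/
abbrev V8 : Type := Fin 8 → ℂ

/-- The standard basis vectors of `ℂ⁸`; `v i` corresponds to `v_{i+1}` of the paper. -/
def v (i : Fin 8) : V8 := Pi.single i 1

/-- For subspaces `S, T, U` of `W = ℂ⁸`, the subspace `S∧T∧U` of `⋀³W`, realized as the span,
inside the exterior algebra, of all products `s∧t∧u` with `s ∈ S`, `t ∈ T`, `u ∈ U`.
In particular `wSpan S T ⊤ = S∧T∧V₈` and `wSpan S S S = ⋀³S`. -/
def wSpan (S T U : Submodule ℂ V8) : Submodule ℂ (ExteriorAlgebra ℂ V8) :=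
  Submodule.span ℂ {x | ∃ s ∈ S, ∃ t ∈ T, ∃ u ∈ U, x = ι ℂ s * ι ℂ t * ι ℂ u}

/-- The representative `η₆ = v₄∧v₅∧v₆ + v₁∧v₄∧v₇ + v₂∧v₅∧v₇ + v₂∧v₆∧v₈ + v₃∧v₅∧v₈`
of the open orbit of the orbit closure `Y₆ ⊂ ⋀³ℂ⁸` (with 0-based indices). -/
def η6 : ExteriorAlgebra ℂ V8 :=
  ι ℂ (v 3) * ι ℂ (v 4) * ι ℂ (v 5) + ι ℂ (v 0) * ι ℂ (v 3) * ι ℂ (v 6) +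
  ι ℂ (v 1) * ι ℂ (v 4) * ι ℂ (v 6) + ι ℂ (v 1) * ι ℂ (v 5) * ι ℂ (v 7) +
  ι ℂ (v 2) * ι ℂ (v 4) * ι ℂ (v 7)


/-! Write `u = αv₄ + βv₇` and `w = αv₂ + βv₆` for the extra generators of `U₂` and `U₅`.
Expanding and sorting wedge factors, both `α • η₆` and `β • η₆` are explicit sums of wedges
`a∧b∧c` with `a ∈ U₂`, `b ∈ U₅`, plus one wedge of three vectors of `U₅` (whose first factor is
`w`); as `α` or `β` is nonzero, `η₆ ∈ U₂∧U₅∧V₈ + ⋀³U₅`. For `α = 1` the spanning vectors of both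
spaces have a unit coordinate pattern, giving the dimensions `2` and `5`, and every `x ∈ U₅`
satisfies `α x₆ = β x₂`, so `β` is recovered from `U₅` and the flags are pairwise distinct. -/

namespace ExteriorAlgebra

variable {R M : Type*} [CommRing R] [AddCommGroup M] [Module R M]

theorem ι_mul_ι_swap (x y : M) : ι R x * ι R y = -(ι R y * ι R x) :=
  eq_neg_of_add_eq_zero_left (ι_add_mul_swap x y)

theorem ι_mul_ι_mul_swap (x y : M) (z : ExteriorAlgebra R M) :
    ι R x * (ι R y * z) = -(ι R y * (ι R x * z)) := by
  rw [← mul_assoc, ← mul_assoc, ι_mul_ι_swap x y, neg_mul]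

theorem ι_mul_ι_mul_self (x : M) (z : ExteriorAlgebra R M) : ι R x * (ι R x * z) = 0 := by
  rw [← mul_assoc, ι_sq_zero, zero_mul]

end ExteriorAlgebra

theorem LinearIndependent.of_coords {K m n : Type*} [Field K] [DecidableEq n] {b : n → m → K}
    (idx : n → m) (h : ∀ i, (fun j ↦ b i (idx j)) = Pi.single i 1) : LinearIndependent K b :=
  LinearIndependent.of_comp (LinearMap.funLeft K K idx) <| by
    convert Pi.linearIndependent_single_one n K with i
    exact h i

theorem finrank_span_range_eq_of_coords {K m : Type*} [Field K] {n : ℕ} {b : Fin n → m → K}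
    (idx : Fin n → m) (h : ∀ i, (fun j ↦ b i (idx j)) = Pi.single i 1) :
    Module.finrank K (Submodule.span K (Set.range b)) = n := by
  simpa using finrank_span_eq_card (LinearIndependent.of_coords idx h)

-- Oriented by `j < i`: as `simp` lemmas these two sort the factors of a wedge product by index.
theorem ι_v_mul_ι_v_of_lt {i j : Fin 8} (_h : j < i) :
    ι ℂ (v i) * ι ℂ (v j) = -(ι ℂ (v j) * ι ℂ (v i)) :=
  ι_mul_ι_swap _ _

theorem ι_v_mul_ι_v_mul_of_lt {i j : Fin 8} (_h : j < i) (z : ExteriorAlgebra ℂ V8) :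
    ι ℂ (v i) * (ι ℂ (v j) * z) = -(ι ℂ (v j) * (ι ℂ (v i) * z)) :=
  ι_mul_ι_mul_swap _ _ _

theorem mem_wSpan {S T U : Submodule ℂ V8} {s t u : V8} (hs : s ∈ S) (ht : t ∈ T) (hu : u ∈ U) :
    ι ℂ s * ι ℂ t * ι ℂ u ∈ wSpan S T U :=
  Submodule.subset_span ⟨s, hs, t, ht, u, hu, rfl⟩

def flagSpan (V₂ V₅ : Submodule ℂ V8) : Submodule ℂ (ExteriorAlgebra ℂ V8) :=
  wSpan V₂ V₅ ⊤ ⊔ wSpan V₅ V₅ V₅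

def U₂ (α β : ℂ) : Submodule ℂ V8 := Submodule.span ℂ {v 7, α • v 3 + β • v 6}

def U₅ (α β : ℂ) : Submodule ℂ V8 := Submodule.span ℂ {v 3, v 4, v 6, v 7, α • v 1 + β • v 5}

theorem subset_U₂ (α β : ℂ) : {v 7, α • v 3 + β • v 6} ⊆ (U₂ α β : Set V8) :=
  Submodule.subset_span

theorem subset_U₅ (α β : ℂ) : {v 3, v 4, v 6, v 7, α • v 1 + β • v 5} ⊆ (U₅ α β : Set V8) :=
  Submodule.subset_span

theorem U₂_le_U₅ (α β : ℂ) : U₂ α β ≤ U₅ α β := by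
  refine Submodule.span_le.mpr (Set.insert_subset (subset_U₅ α β (by simp)) ?_)
  simpa using add_mem (Submodule.smul_mem _ α (subset_U₅ α β (by simp)))
    (Submodule.smul_mem _ β (subset_U₅ α β (by simp)))

theorem U₅_le_ker (α β : ℂ) :
    U₅ α β ≤ LinearMap.ker (α • LinearMap.proj 5 - β • LinearMap.proj 1 : V8 →ₗ[ℂ] ℂ) := by
  rw [U₅, Submodule.span_le]
  rintro x (rfl | rfl | rfl | rfl | rfl) <;> simp [v, mul_comm]

theorem U₅_one_injective : Function.Injective (U₅ 1) := by
  intro β β' h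
  have hmem : (1 : ℂ) • v 1 + β • v 5 ∈ U₅ 1 β' := h ▸ Submodule.subset_span (by simp)
  simpa [v, Pi.single_apply, sub_eq_zero] using U₅_le_ker 1 β' hmem

theorem finrank_U₂_one (β : ℂ) : Module.finrank ℂ (U₂ 1 β) = 2 := by
  have hrange : Set.range ![v 7, (1 : ℂ) • v 3 + β • v 6] = {v 7, (1 : ℂ) • v 3 + β • v 6} := by
    simp only [Matrix.range_cons, Matrix.range_empty, Set.union_empty, Set.singleton_union]
  rw [U₂, ← hrange]
  refine finrank_span_range_eq_of_coords ![7, 3] fun i ↦ ?_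
  ext j; fin_cases i <;> fin_cases j <;> simp [v]

theorem finrank_U₅_one (β : ℂ) : Module.finrank ℂ (U₅ 1 β) = 5 := by
  have hrange : Set.range ![v 3, v 4, v 6, v 7, (1 : ℂ) • v 1 + β • v 5] =
      {v 3, v 4, v 6, v 7, (1 : ℂ) • v 1 + β • v 5} := by
    simp only [Matrix.range_cons, Matrix.range_empty, Set.union_empty, Set.singleton_union]
  rw [U₅, ← hrange]
  refine finrank_span_range_eq_of_coords ![3, 4, 6, 7, 1] fun i ↦ ?_
  ext j; fin_cases i <;> fin_cases j <;> simp [v]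

theorem smul_η6_eq_α (α β : ℂ) :
    α • η6 = -α • (ι ℂ (v 7) * ι ℂ (v 4) * ι ℂ (v 2)) +
      ι ℂ (α • v 3 + β • v 6) * ι ℂ (v 6) * ι ℂ (v 0) +
      ι ℂ (v 7) * ι ℂ (α • v 1 + β • v 5) * ι ℂ (v 5) +
      ι ℂ (α • v 3 + β • v 6) * ι ℂ (v 4) * ι ℂ (v 5) +
      ι ℂ (α • v 1 + β • v 5) * ι ℂ (v 4) * ι ℂ (v 6) := by
  simp only [η6, map_add, map_smul, add_mul, mul_add, smul_mul_assoc, mul_smul_comm, mul_assoc,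
    ι_sq_zero, ι_mul_ι_mul_self, ι_v_mul_ι_v_of_lt, ι_v_mul_ι_v_mul_of_lt, Fin.reduceLT,
    neg_mul, mul_neg, neg_neg, smul_neg, smul_zero, add_zero]
  module

theorem smul_η6_eq_β (α β : ℂ) :
    β • η6 = -β • (ι ℂ (v 7) * ι ℂ (v 4) * ι ℂ (v 2)) -
      ι ℂ (α • v 3 + β • v 6) * ι ℂ (v 3) * ι ℂ (v 0) -
      ι ℂ (v 7) * ι ℂ (α • v 1 + β • v 5) * ι ℂ (v 1) -
      ι ℂ (α • v 3 + β • v 6) * ι ℂ (v 4) * ι ℂ (v 1) +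
      ι ℂ (α • v 1 + β • v 5) * ι ℂ (v 3) * ι ℂ (v 4) := by
  simp only [η6, map_add, map_smul, add_mul, mul_add, smul_mul_assoc, mul_smul_comm, mul_assoc,
    ι_sq_zero, ι_mul_ι_mul_self, ι_v_mul_ι_v_of_lt, ι_v_mul_ι_v_mul_of_lt, Fin.reduceLT,
    neg_mul, mul_neg, neg_neg, smul_neg, smul_zero, zero_add]
  module

theorem mem_flagSpan_of_mem_left {V₂ V₅ : Submodule ℂ V8} {x y : V8} (z : V8) (hx : x ∈ V₂)
    (hy : y ∈ V₅) : ι ℂ x * ι ℂ y * ι ℂ z ∈ flagSpan V₂ V₅ :=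
  Submodule.mem_sup_left (mem_wSpan hx hy trivial)

theorem mem_flagSpan_of_mem_right {V₂ V₅ : Submodule ℂ V8} {x y z : V8} (hx : x ∈ V₅)
    (hy : y ∈ V₅) (hz : z ∈ V₅) : ι ℂ x * ι ℂ y * ι ℂ z ∈ flagSpan V₂ V₅ :=
  Submodule.mem_sup_right (mem_wSpan hx hy hz)

section

variable (α β : ℂ)

theorem smul_η6_mem_flagSpan_α : α • η6 ∈ flagSpan (U₂ α β) (U₅ α β) := by
  rw [smul_η6_eq_α α β]
  refine add_mem ?_ (mem_flagSpan_of_mem_right (subset_U₅ α β (by simp))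
    (subset_U₅ α β (by simp)) (subset_U₅ α β (by simp)))
  refine add_mem (add_mem (add_mem (Submodule.smul_mem _ _ ?_) ?_) ?_) ?_ <;>
    exact mem_flagSpan_of_mem_left _ (subset_U₂ α β (by simp)) (subset_U₅ α β (by simp))

theorem smul_η6_mem_flagSpan_β : β • η6 ∈ flagSpan (U₂ α β) (U₅ α β) := by
  rw [smul_η6_eq_β α β]
  refine add_mem ?_ (mem_flagSpan_of_mem_right (subset_U₅ α β (by simp))
    (subset_U₅ α β (by simp)) (subset_U₅ α β (by simp)))
  refine sub_mem (sub_mem (sub_mem (Submodule.smul_mem _ _ ?_) ?_) ?_) ?_ <;>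
    exact mem_flagSpan_of_mem_left _ (subset_U₂ α β (by simp)) (subset_U₅ α β (by simp))

theorem η6_mem_flagSpan (h : (α, β) ≠ (0, 0)) : η6 ∈ flagSpan (U₂ α β) (U₅ α β) := by
  by_cases hα : α = 0
  · have hβ : β ≠ 0 := by rintro rfl; exact h (by rw [hα])
    exact (Submodule.smul_mem_iff _ hβ).mp (smul_η6_mem_flagSpan_β α β)
  · exact (Submodule.smul_mem_iff _ hα).mp (smul_η6_mem_flagSpan_α α β)

end

theorem rational_curve_of_flags_over_η6 :
    (∀ α β : ℂ, (α, β) ≠ (0, 0) →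
      η6 ∈ wSpan (Submodule.span ℂ {v 7, α • v 3 + β • v 6})
              (Submodule.span ℂ {v 3, v 4, v 6, v 7, α • v 1 + β • v 5}) ⊤ ⊔
            wSpan (Submodule.span ℂ {v 3, v 4, v 6, v 7, α • v 1 + β • v 5})
              (Submodule.span ℂ {v 3, v 4, v 6, v 7, α • v 1 + β • v 5})
              (Submodule.span ℂ {v 3, v 4, v 6, v 7, α • v 1 + β • v 5})) ∧
    {P : Submodule ℂ V8 × Submodule ℂ V8 |
      Module.finrank ℂ P.1 = 2 ∧ Module.finrank ℂ P.2 = 5 ∧ P.1 ≤ P.2 ∧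
      η6 ∈ wSpan P.2 P.2 P.2 ⊔ wSpan P.1 P.2 ⊤}.Infinite := by
  refine ⟨η6_mem_flagSpan, ?_⟩
  refine Set.infinite_of_injective_forall_mem (f := fun β ↦ (U₂ 1 β, U₅ 1 β))
    (fun β β' h ↦ U₅_one_injective (congrArg Prod.snd h)) fun β ↦ ?_
  refine ⟨finrank_U₂_one β, finrank_U₅_one β, U₂_le_U₅ 1 β, ?_⟩
  rw [sup_comm]
  exact η6_mem_flagSpan 1 β (by simp)
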